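/- arXiv:1707.04598 — 6 statements merged into one kernel-verified Lean document; each statement's English description precedes it below -/
import Mathlib

section
/- Let F(x_bold) = Σ_{i=1}^N f_i(x_i) for x_bold = (x_1,...,x_N) ∈ R^{nN}, let h_bold(x_bold) = (h_1(x_1),...,h_N(x_N)), and S_bold = S ⊗ I_n for the incidence matrix S of a connected graph. Then x* ∈ R^n is a local minimizer of min f(x) = Σ_i f_i(x) subject to h_i(x) = 0 for all i, if and only if x_bold* = 1 ⊗ x* is a local minimizer of min F(x_bold) subject to h_bold(x_bold) = 0 and S_bold·x_bold = 0. -/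
open Matrix Kronecker

/-- `x*` is a local minimizer of `min Σᵢ fᵢ(x)` s.t. `hᵢ(x) = 0`
for all `i`, iff `𝟙 ⊗ x*` is a local minimizer of the lifted problem
`min F(x) = Σᵢ fᵢ(xᵢ)` s.t. `h_bold(x) = 0`, `(S ⊗ Iₙ) x = 0`. -/
theorem stmt5 (N n : ℕ) (G : SimpleGraph (Fin N)) [DecidableRel G.Adj]
    (hG : G.Connected)
    (s : Fin N → Fin N → ℝ)
    (hpos : ∀ i j, G.Adj i j → 0 < s i j)
    (hzero : ∀ i j, ¬ G.Adj i j → s i j = 0)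
    (S : Matrix {p : Fin N × Fin N // G.Adj p.1 p.2} (Fin N) ℝ)
    (hS : ∀ e l, S e l =
      if l = e.1.1 then s e.1.1 e.1.2
      else if l = e.1.2 then - s e.1.1 e.1.2 else 0)
    (f h : Fin N → (Fin n → ℝ) → ℝ)
    (hf : ∀ i, ContDiff ℝ 2 (f i)) (hh : ∀ i, ContDiff ℝ 2 (h i))
    (xstar : Fin n → ℝ) :
    IsLocalMinOn (fun x => ∑ i, f i x) {x | ∀ i, h i x = 0} xstar ↔
    IsLocalMinOn (fun xb : Fin N × Fin n → ℝ => ∑ i, f i (fun k => xb (i, k)))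
      {xb | (∀ i, h i (fun k => xb (i, k)) = 0) ∧
        (S ⊗ₖ (1 : Matrix (Fin n) (Fin n) ℝ)) *ᵥ xb = 0}
      (fun p => xstar p.2) := by
  -- entrywise formula for the lifted incidence matrix action
  have key : ∀ (xb : Fin N × Fin n → ℝ) (e : {p : Fin N × Fin N // G.Adj p.1 p.2}) (k : Fin n),
      ((S ⊗ₖ (1 : Matrix (Fin n) (Fin n) ℝ)) *ᵥ xb) (e, k)
        = s e.1.1 e.1.2 * xb (e.1.1, k) - s e.1.1 e.1.2 * xb (e.1.2, k) := by
    intro xb e k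
    have hne : e.1.1 ≠ e.1.2 := e.2.ne
    have hterm : ∀ j, S e j * xb (j, k)
        = (if j = e.1.1 then s e.1.1 e.1.2 * xb (e.1.1, k) else 0)
          + (if j = e.1.2 then -(s e.1.1 e.1.2 * xb (e.1.2, k)) else 0) := by
      intro j
      rw [hS]
      rcases eq_or_ne j e.1.1 with h1 | h1
      · subst h1; simp [hne]
      · rcases eq_or_ne j e.1.2 with h2 | h2
        · subst h2; simp [h1]
        · simp [h1, h2]
    simp only [mulVec, dotProduct, Fintype.sum_prod_type, Matrix.kroneckerMap_apply,
      Matrix.one_apply, mul_ite, mul_one, mul_zero, ite_mul, zero_mul]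
    simp only [Finset.sum_ite_eq, Finset.mem_univ, if_true]
    rw [Finset.sum_congr rfl (fun j _ => hterm j)]
    rw [Finset.sum_add_distrib]
    simp only [Finset.sum_ite_eq', Finset.mem_univ, if_true]
    ring
  -- consensus: feasible points have equal blocks
  have cons : ∀ xb, (S ⊗ₖ (1 : Matrix (Fin n) (Fin n) ℝ)) *ᵥ xb = 0 →
      ∀ i j (k : Fin n), xb (i, k) = xb (j, k) := by
    intro xb hx i j k
    have hadj : ∀ a b, G.Adj a b → xb (a, k) = xb (b, k) := by
      intro a b hab
      have h1 := congrFun hx (⟨(a, b), hab⟩, k)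
      rw [key] at h1
      simp only [Pi.zero_apply] at h1
      have hc := hpos a b hab
      have h2 : s a b * xb (a, k) = s a b * xb (b, k) := by linarith
      exact mul_left_cancel₀ (ne_of_gt hc) h2
    obtain ⟨w⟩ := hG.preconnected i j
    induction w with
    | nil => rfl
    | cons ha p ih => exact (hadj _ _ ha).trans ih
  -- consensus vectors are in the kernel
  have consFeas : ∀ x : Fin n → ℝ,
      (S ⊗ₖ (1 : Matrix (Fin n) (Fin n) ℝ)) *ᵥ (fun p => x p.2) = 0 := by
    intro x
    funext p
    obtain ⟨e, k⟩ := p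
    rw [key]
    simp
  obtain ⟨i0⟩ := hG.nonempty
  constructor
  · intro H
    set φ : (Fin N × Fin n → ℝ) → (Fin n → ℝ) := fun xb k => xb (i0, k) with hφ
    have hφc : Continuous φ := continuous_pi fun k => continuous_apply _
    have hmaps : Set.MapsTo φ
        {xb | (∀ i, h i (fun k => xb (i, k)) = 0) ∧
          (S ⊗ₖ (1 : Matrix (Fin n) (Fin n) ℝ)) *ᵥ xb = 0}
        {x | ∀ i, h i x = 0} := by
      intro xb hxb i
      have he : φ xb = fun k => xb (i, k) := funext fun k => cons xb hxb.2 i0 i k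
      rw [he]
      exact hxb.1 i
    have hT : Filter.Tendsto φ
        (nhdsWithin (fun p => xstar p.2)
          {xb | (∀ i, h i (fun k => xb (i, k)) = 0) ∧
            (S ⊗ₖ (1 : Matrix (Fin n) (Fin n) ℝ)) *ᵥ xb = 0})
        (nhdsWithin xstar {x | ∀ i, h i x = 0}) :=
      hφc.continuousAt.continuousWithinAt.tendsto_nhdsWithin hmaps
    have H' := hT.eventually H
    refine (H'.and eventually_mem_nhdsWithin).mono ?_
    rintro xb ⟨hle, hxbB⟩
    have e1 : ∀ i, (fun k => xb (i, k)) = φ xb :=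
      fun i => funext fun k => cons xb hxbB.2 i i0 k
    calc (∑ i, f i (fun k => (fun p : Fin N × Fin n => xstar p.2) (i, k)))
        = ∑ i, f i xstar := rfl
      _ ≤ ∑ i, f i (φ xb) := hle
      _ = ∑ i, f i (fun k => xb (i, k)) :=
          Finset.sum_congr rfl fun i _ => by rw [e1 i]
  · intro H
    set ψ : (Fin n → ℝ) → (Fin N × Fin n → ℝ) := fun x p => x p.2 with hψ
    have hψc : Continuous ψ := continuous_pi fun p => continuous_apply _
    have hmaps : Set.MapsTo ψ {x | ∀ i, h i x = 0}
        {xb | (∀ i, h i (fun k => xb (i, k)) = 0) ∧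
          (S ⊗ₖ (1 : Matrix (Fin n) (Fin n) ℝ)) *ᵥ xb = 0} := by
      intro x hx
      exact ⟨fun i => hx i, consFeas x⟩
    have hT : Filter.Tendsto ψ
        (nhdsWithin xstar {x | ∀ i, h i x = 0})
        (nhdsWithin (fun p => xstar p.2)
          {xb | (∀ i, h i (fun k => xb (i, k)) = 0) ∧
            (S ⊗ₖ (1 : Matrix (Fin n) (Fin n) ℝ)) *ᵥ xb = 0}) :=
      hψc.continuousAt.continuousWithinAt.tendsto_nhdsWithin hmaps
    exact hT.eventually H
end

section
/- Under the full-rank assumption on ∇h(x*) = [∇h_1(x*),...,∇h_N(x*)], the nullspace of the matrix [∇h_bold(x_bold*), S_bold'] is exactly {(0', v')' : v ∈ Null(S_bold')}, where x_bold* = 1 ⊗ x* and ∇h_bold_i(x_bold*) is the block vector whose i-th n-block equals ∇h_i(x*) and all other blocks are zero. -/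
open Matrix Kronecker

/-- if the gradients `g i = ∇hᵢ(x*)` are linearly independent,
then `Null([∇h_bold(x_bold*), S_boldᵀ]) = {(0, v) : v ∈ Null(S_boldᵀ)}`,
i.e. `A u + S_boldᵀ v = 0` iff `u = 0` and `S_boldᵀ v = 0`. -/
theorem stmt6 (N n : ℕ) (G : SimpleGraph (Fin N)) [DecidableRel G.Adj]
    (hG : G.Connected)
    (s : Fin N → Fin N → ℝ)
    (hpos : ∀ i j, G.Adj i j → 0 < s i j)
    (hzero : ∀ i j, ¬ G.Adj i j → s i j = 0)
    (S : Matrix {p : Fin N × Fin N // G.Adj p.1 p.2} (Fin N) ℝ)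
    (hS : ∀ e l, S e l =
      if l = e.1.1 then s e.1.1 e.1.2
      else if l = e.1.2 then - s e.1.1 e.1.2 else 0)
    (g : Fin N → (Fin n → ℝ))
    (hli : LinearIndependent ℝ g)
    (A : Matrix (Fin N × Fin n) (Fin N) ℝ)
    (hA : ∀ p j, A p j = if p.1 = j then g j p.2 else 0) :
    ∀ (u : Fin N → ℝ)
      (v : {p : Fin N × Fin N // G.Adj p.1 p.2} × Fin n → ℝ),
      A *ᵥ u + (S ⊗ₖ (1 : Matrix (Fin n) (Fin n) ℝ))ᵀ *ᵥ v = 0 ↔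
        (u = 0 ∧ (S ⊗ₖ (1 : Matrix (Fin n) (Fin n) ℝ))ᵀ *ᵥ v = 0) := by
  intro u v
  -- each row of S sums to 0
  have hrow : ∀ e : {p : Fin N × Fin N // G.Adj p.1 p.2}, ∑ i, S e i = 0 := by
    intro e
    have hne : e.1.1 ≠ e.1.2 := G.ne_of_adj e.2
    have : ∀ i, S e i = (if i = e.1.1 then s e.1.1 e.1.2 else 0)
        + (if i = e.1.2 then - s e.1.1 e.1.2 else 0) := by
      intro i
      rw [hS]
      by_cases h1 : i = e.1.1 <;> by_cases h2 : i = e.1.2 <;>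
        simp_all
    simp [this, Finset.sum_add_distrib]
  -- entry formulas
  have hAu : ∀ (i : Fin N) (k : Fin n), (A *ᵥ u) (i, k) = u i * g i k := by
    intro i k
    simp [mulVec, dotProduct, hA, Finset.sum_ite_eq, mul_comm]
  have hSv : ∀ (i : Fin N) (k : Fin n),
      ((S ⊗ₖ (1 : Matrix (Fin n) (Fin n) ℝ))ᵀ *ᵥ v) (i, k)
        = ∑ e, S e i * v (e, k) := by
    intro i k
    simp [mulVec, dotProduct, Fintype.sum_prod_type, Matrix.one_apply, mul_ite, mul_one,
      mul_zero, ite_mul, zero_mul,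
      Finset.sum_ite_eq, Finset.sum_ite_eq']
  -- sum over blocks of the Sᵀv part vanishes
  have hsumSv : ∀ k : Fin n,
      ∑ i, ((S ⊗ₖ (1 : Matrix (Fin n) (Fin n) ℝ))ᵀ *ᵥ v) (i, k) = 0 := by
    intro k
    simp only [hSv]
    rw [Finset.sum_comm]
    apply Finset.sum_eq_zero
    intro e _
    rw [← Finset.sum_mul, hrow, zero_mul]
  constructor
  · intro h
    have hu : u = 0 := by
      have hsum : ∀ k : Fin n, ∑ i, u i * g i k = 0 := by
        intro k
        have h2 : ∑ i, ((A *ᵥ u) (i, k)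
            + ((S ⊗ₖ (1 : Matrix (Fin n) (Fin n) ℝ))ᵀ *ᵥ v) (i, k)) = 0 := by
          apply Finset.sum_eq_zero
          intro i _
          have := congrFun h (i, k)
          simpa using this
        rw [Finset.sum_add_distrib, hsumSv, add_zero] at h2
        simpa [hAu] using h2
      have hzero' : ∑ i, u i • g i = 0 := by
        funext k
        simpa [Finset.sum_apply] using hsum k
      have := (Fintype.linearIndependent_iff.mp hli) u hzero'
      funext i; exact this i
    refine ⟨hu, ?_⟩
    have : A *ᵥ u = 0 := by
      funext p
      rcases p with ⟨i, k⟩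
      simp [hAu, hu]
    rw [this, zero_add] at h
    exact h
  · rintro ⟨hu, hv⟩
    have : A *ᵥ u = 0 := by
      funext p
      rcases p with ⟨i, k⟩
      simp [hAu, hu]
    rw [this, hv, add_zero]
end

section
/- Let x* be a local minimizer of min Σ_i f_i(x) subject to h(x) = 0 with unique Lagrange multiplier ψ* (i.e., ∇f(x*) + ∇h(x*)ψ* = 0), and let x_bold* = 1 ⊗ x* be the corresponding local minimizer of the lifted problem with unique multipliers (μ*, λ*), λ* ∈ Range(S_bold). Then ψ* = μ*. -/
/-!
Each row of the incidence matrix sums to zero, so summing the lifted stationarity conditions over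
the agents `i` cancels the consensus term `(S ⊗ I)ᵀ λ` and leaves `∇f(x*) + ∇h(x*) μ* = 0`.
Comparing with `∇f(x*) + ∇h(x*) ψ* = 0`, linear independence of the constraint gradients forces
`ψ* = μ*`.
-/

open Matrix Kronecker

theorem LinearIndependent.eq_of_sum_mul_apply_single_eq {R ι κ : Type*} [CommRing R]
    [TopologicalSpace R] [IsTopologicalRing R] [Fintype ι] [Finite κ] [DecidableEq κ]
    {φ : ι → (κ → R) →L[R] R} (hφ : LinearIndependent R φ) {c d : ι → R}
    (h : ∀ k, ∑ i, c i * φ i (Pi.single k 1) = ∑ i, d i * φ i (Pi.single k 1)) : c = d := by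
  have hzero : ∑ i, (c i - d i) • φ i = 0 := by
    refine ContinuousLinearMap.coe_injective (LinearMap.pi_ext fun k x => ?_)
    have hx : (Pi.single k x : κ → R) = x • Pi.single k 1 := by simp [← Pi.single_smul]
    simp [hx, sub_mul, h k]
  funext i
  exact sub_eq_zero.1 (Fintype.linearIndependent_iff.1 hφ _ hzero i)

theorem Matrix.sum_row_eq_zero_of_incidence {R E V : Type*} [AddCommGroup R] [Fintype V]
    [DecidableEq V] {S : Matrix E V R} {src tgt : E → V} {w : E → R}
    (hne : ∀ e, src e ≠ tgt e)
    (hS : ∀ e l, S e l = if l = src e then w e else if l = tgt e then -w e else 0) (e : E) :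
    ∑ l, S e l = 0 := by
  rw [Fintype.sum_eq_add (src e) (tgt e) (hne e) fun l hl => by simp [hS, hl.1, hl.2]]
  simp [hS, (hne e).symm]

theorem Matrix.sum_transpose_kronecker_one_mulVec_eq_zero {R m l n : Type*} [NonAssocSemiring R]
    [Fintype m] [Fintype l] [Fintype n] [DecidableEq n] {S : Matrix m l R}
    (hS : ∀ e, ∑ i, S e i = 0) (v : m × n → R) (k : n) :
    ∑ i, ((S ⊗ₖ (1 : Matrix n n R))ᵀ *ᵥ v) (i, k) = 0 := by
  calc ∑ i, ((S ⊗ₖ (1 : Matrix n n R))ᵀ *ᵥ v) (i, k)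
      = ∑ q : m × n, (∑ i, S q.1 i) * (1 : Matrix n n R) q.2 k * v q := by
        simp only [mulVec, dotProduct, transpose_apply, Finset.sum_mul]
        exact Finset.sum_comm
    _ = 0 := by simp [hS]

theorem stmt9_general (N n : ℕ) (G : SimpleGraph (Fin N)) [DecidableRel G.Adj]
    (s : Fin N → Fin N → ℝ)
    (S : Matrix {p : Fin N × Fin N // G.Adj p.1 p.2} (Fin N) ℝ)
    (hS : ∀ e l, S e l =
      if l = e.1.1 then s e.1.1 e.1.2
      else if l = e.1.2 then - s e.1.1 e.1.2 else 0)
    (f h : Fin N → (Fin n → ℝ) → ℝ)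
    (hf : ∀ i, ContDiff ℝ 2 (f i))
    (xstar : Fin n → ℝ)
    (hli : LinearIndependent ℝ (fun i => fderiv ℝ (h i) xstar))
    (ψ μ : Fin N → ℝ)
    (lam : {p : Fin N × Fin N // G.Adj p.1 p.2} × Fin n → ℝ)
    (hψ : ∀ k : Fin n,
      fderiv ℝ (fun x => ∑ i, f i x) xstar (Pi.single k 1)
        + ∑ i, ψ i * fderiv ℝ (h i) xstar (Pi.single k 1) = 0)
    (hlift : ∀ p : Fin N × Fin n,
      fderiv ℝ (f p.1) xstar (Pi.single p.2 1)
        + μ p.1 * fderiv ℝ (h p.1) xstar (Pi.single p.2 1)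
        + ((S ⊗ₖ (1 : Matrix (Fin n) (Fin n) ℝ))ᵀ *ᵥ lam) p = 0) :
    ψ = μ := by
  have hcons := Matrix.sum_transpose_kronecker_one_mulVec_eq_zero
    (Matrix.sum_row_eq_zero_of_incidence (fun e => G.ne_of_adj e.2) hS) lam
  refine hli.eq_of_sum_mul_apply_single_eq fun k => ?_
  have hfsum : fderiv ℝ (fun x => ∑ i, f i x) xstar (Pi.single k 1)
      = ∑ i, fderiv ℝ (f i) xstar (Pi.single k 1) := by
    rw [fderiv_fun_sum fun i _ => ((hf i).differentiable two_ne_zero).differentiableAt]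
    simp
  have hμ : ∑ i, fderiv ℝ (f i) xstar (Pi.single k 1)
      + ∑ i, μ i * fderiv ℝ (h i) xstar (Pi.single k 1) = 0 := by
    simpa [Finset.sum_add_distrib, hcons k] using
      Finset.sum_eq_zero (s := Finset.univ) fun i _ => hlift (i, k)
  linarith [hψ k]

/-- the (unique) Lagrange multiplier `ψ*` of the original problem
coincides with the multiplier `μ*` of the lifted problem. -/
theorem stmt9 (N n : ℕ) (G : SimpleGraph (Fin N)) [DecidableRel G.Adj]
    (hG : G.Connected)
    (s : Fin N → Fin N → ℝ)
    (hpos : ∀ i j, G.Adj i j → 0 < s i j)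
    (hzero : ∀ i j, ¬ G.Adj i j → s i j = 0)
    (S : Matrix {p : Fin N × Fin N // G.Adj p.1 p.2} (Fin N) ℝ)
    (hS : ∀ e l, S e l =
      if l = e.1.1 then s e.1.1 e.1.2
      else if l = e.1.2 then - s e.1.1 e.1.2 else 0)
    (f h : Fin N → (Fin n → ℝ) → ℝ)
    (hf : ∀ i, ContDiff ℝ 2 (f i)) (hh : ∀ i, ContDiff ℝ 2 (h i))
    (xstar : Fin n → ℝ)
    (hli : LinearIndependent ℝ (fun i => fderiv ℝ (h i) xstar))
    (ψ μ : Fin N → ℝ)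
    (lam : {p : Fin N × Fin N // G.Adj p.1 p.2} × Fin n → ℝ)
    (hlam : lam ∈ LinearMap.range (S ⊗ₖ (1 : Matrix (Fin n) (Fin n) ℝ)).mulVecLin)
    (hψ : ∀ k : Fin n,
      fderiv ℝ (fun x => ∑ i, f i x) xstar (Pi.single k 1)
        + ∑ i, ψ i * fderiv ℝ (h i) xstar (Pi.single k 1) = 0)
    (hlift : ∀ p : Fin N × Fin n,
      fderiv ℝ (f p.1) xstar (Pi.single p.2 1)
        + μ p.1 * fderiv ℝ (h p.1) xstar (Pi.single p.2 1)
        + ((S ⊗ₖ (1 : Matrix (Fin n) (Fin n) ℝ))ᵀ *ᵥ lam) p = 0) :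
    ψ = μ :=
  stmt9_general N n G s S hS f h hf xstar hli ψ μ lam hψ hlift
end

section
/- Let H be a symmetric positive definite matrix, A a matrix, S_bold a matrix, and suppose the nullspace of [A, S_bold'] equals {(0', v')' : v ∈ Null(S_bold')}. Let J be the orthogonal projection onto Null(S_bold') and α > 0. Then every eigenvalue of the block matrix B = [[H, A, S_bold'], [−A', 0, 0], [−J, 0, (1/α)J]] has positive real part. -/
/-!
Split an eigenvector as `v = vr + i vi`. Since `B` is real, `B vr = Re β vr - Im β vi` and
`B vi = Im β vr + Re β vi`, hence `Re β (‖vr‖² + ‖vi‖²) = vrᵀ B vr + viᵀ B vi`. The off-diagonal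
blocks of `B` form a skew-symmetric matrix, so `yᵀ B y = xᵀ H x + α⁻¹ wᵀ J w ≥ 0` for
`y = (x, u, w)`. If `Re β ≤ 0`, both forms vanish, which forces `x = 0` and `J w = 0` for
`y = vr, vi`. The first block row of the eigen-equation then reads `A u + Sᵀ w = 0`, and the
nullspace condition gives `u = 0` and `w = J w = 0`, so `v = 0`.
-/

open Matrix

section RealMatrixEigen

variable {m n : Type*} [Fintype n]

lemma re_map_ofReal_mulVec (M : Matrix m n ℝ) (z : n → ℂ) :
    Complex.re ∘ (M.map Complex.ofReal *ᵥ z) = M *ᵥ (Complex.re ∘ z) := by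
  ext i
  simp [mulVec, dotProduct, Complex.re_sum]

lemma im_map_ofReal_mulVec (M : Matrix m n ℝ) (z : n → ℂ) :
    Complex.im ∘ (M.map Complex.ofReal *ᵥ z) = M *ᵥ (Complex.im ∘ z) := by
  ext i
  simp [mulVec, dotProduct, Complex.im_sum]

variable {M : Matrix n n ℝ} {β : ℂ} {v : n → ℂ}

lemma mulVec_re_of_map_ofReal_mulVec_eq_smul (h : M.map Complex.ofReal *ᵥ v = β • v) :
    M *ᵥ (Complex.re ∘ v) = β.re • (Complex.re ∘ v) - β.im • (Complex.im ∘ v) := by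
  rw [← re_map_ofReal_mulVec, h]
  ext i
  simp

lemma mulVec_im_of_map_ofReal_mulVec_eq_smul (h : M.map Complex.ofReal *ᵥ v = β • v) :
    M *ᵥ (Complex.im ∘ v) = β.im • (Complex.re ∘ v) + β.re • (Complex.im ∘ v) := by
  rw [← im_map_ofReal_mulVec, h]
  ext i
  simp [add_comm]

lemma re_mul_eq_of_map_ofReal_mulVec_eq_smul (h : M.map Complex.ofReal *ᵥ v = β • v) :
    β.re * ((Complex.re ∘ v) ⬝ᵥ (Complex.re ∘ v) + (Complex.im ∘ v) ⬝ᵥ (Complex.im ∘ v)) =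
      (Complex.re ∘ v) ⬝ᵥ (M *ᵥ (Complex.re ∘ v)) + (Complex.im ∘ v) ⬝ᵥ (M *ᵥ (Complex.im ∘ v)) := by
  rw [mulVec_re_of_map_ofReal_mulVec_eq_smul h, mulVec_im_of_map_ofReal_mulVec_eq_smul h]
  simp only [dotProduct_sub, dotProduct_add, dotProduct_smul, smul_eq_mul,
    dotProduct_comm (Complex.im ∘ v) (Complex.re ∘ v)]
  ring

end RealMatrixEigen

lemma Matrix.posSemidef_of_transpose_eq_of_mul_self_eq {n : Type*} [Fintype n]
    {J : Matrix n n ℝ} (hsym : Jᵀ = J) (hidem : J * J = J) : J.PosSemidef := by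
  have : J = Jᴴ * J := by rw [conjTranspose_eq_transpose_of_trivial, hsym, hidem]
  exact this ▸ posSemidef_conjTranspose_mul_self J

section SaddlePoint

variable {m p q R : Type*} [Fintype m] [Fintype p] [Fintype q]

def saddlePointMatrix [Ring R] (H : Matrix m m R) (A : Matrix m p R) (S : Matrix q m R)
    (D : Matrix q q R) : Matrix (m ⊕ (p ⊕ q)) (m ⊕ (p ⊕ q)) R :=
  fromBlocks H (fromCols A Sᵀ) (fromRows (-Aᵀ) (-S)) (fromBlocks 0 0 0 D)

variable (H : Matrix m m R) (A : Matrix m p R) (S : Matrix q m R) (D : Matrix q q R)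

lemma saddlePointMatrix_mulVec_inl [Ring R] (y : m ⊕ (p ⊕ q) → R) :
    (saddlePointMatrix H A S D *ᵥ y) ∘ Sum.inl =
      H *ᵥ (y ∘ Sum.inl) + A *ᵥ (y ∘ Sum.inr ∘ Sum.inl) + Sᵀ *ᵥ (y ∘ Sum.inr ∘ Sum.inr) := by
  simp [saddlePointMatrix, fromBlocks_mulVec, fromCols_mulVec, add_assoc, Function.comp_assoc]

lemma dotProduct_saddlePointMatrix_mulVec [CommRing R] (y : m ⊕ (p ⊕ q) → R) :
    y ⬝ᵥ (saddlePointMatrix H A S D *ᵥ y) =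
      (y ∘ Sum.inl) ⬝ᵥ (H *ᵥ (y ∘ Sum.inl)) +
        (y ∘ Sum.inr ∘ Sum.inr) ⬝ᵥ (D *ᵥ (y ∘ Sum.inr ∘ Sum.inr)) := by
  set x := y ∘ Sum.inl
  set u := y ∘ Sum.inr ∘ Sum.inl
  set w := y ∘ Sum.inr ∘ Sum.inr
  have hy : y = x ⊕ᵥ (u ⊕ᵥ w) := by ext (i | i | i) <;> rfl
  have hA : u ⬝ᵥ (Aᵀ *ᵥ x) = x ⬝ᵥ (A *ᵥ u) := by
    rw [mulVec_transpose, dotProduct_comm, dotProduct_mulVec]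
  have hS : w ⬝ᵥ (S *ᵥ x) = x ⬝ᵥ (Sᵀ *ᵥ w) := by
    rw [dotProduct_mulVec, ← mulVec_transpose, dotProduct_comm]
  rw [hy]
  simp only [saddlePointMatrix, fromBlocks_mulVec, Sum.elim_comp_inl, Sum.elim_comp_inr,
    fromCols_mulVec, fromRows_mulVec, neg_mulVec, zero_mulVec, add_zero, zero_add,
    sumElim_dotProduct_sumElim, dotProduct_add, dotProduct_neg, hA, hS, dotProduct_zero]
  ring

end SaddlePoint

section RealSaddlePoint

variable {m p q : Type*} [Fintype m] [Fintype p] [Fintype q]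
  {H : Matrix m m ℝ} (A : Matrix m p ℝ) (S : Matrix q m ℝ) {D : Matrix q q ℝ}

lemma dotProduct_saddlePointMatrix_mulVec_nonneg (hH : H.PosSemidef) (hD : D.PosSemidef)
    (y : m ⊕ (p ⊕ q) → ℝ) : 0 ≤ y ⬝ᵥ (saddlePointMatrix H A S D *ᵥ y) := by
  rw [dotProduct_saddlePointMatrix_mulVec]
  simpa using add_nonneg (hH.dotProduct_mulVec_nonneg (y ∘ Sum.inl))
    (hD.dotProduct_mulVec_nonneg (y ∘ Sum.inr ∘ Sum.inr))

lemma eq_zero_of_dotProduct_saddlePointMatrix_mulVec_eq_zero (hH : H.PosDef)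
    (hD : D.PosSemidef) {y : m ⊕ (p ⊕ q) → ℝ}
    (hy : y ⬝ᵥ (saddlePointMatrix H A S D *ᵥ y) = 0) :
    y ∘ Sum.inl = 0 ∧ D *ᵥ (y ∘ Sum.inr ∘ Sum.inr) = 0 := by
  rw [dotProduct_saddlePointMatrix_mulVec] at hy
  have hx := hH.posSemidef.dotProduct_mulVec_nonneg (y ∘ Sum.inl)
  have hw := hD.dotProduct_mulVec_nonneg (y ∘ Sum.inr ∘ Sum.inr)
  simp only [star_trivial] at hx hw
  constructor
  · by_contra hne
    have := hH.dotProduct_mulVec_pos hne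
    simp only [star_trivial] at this
    linarith
  · rw [← hD.dotProduct_mulVec_zero_iff, star_trivial]
    linarith

end RealSaddlePoint

lemma eq_zero_of_saddlePointMatrix_mulVec_inl_eq_zero {m p q R : Type*} [Fintype m] [Fintype p]
    [Fintype q] [Ring R] {H : Matrix m m R} {A : Matrix m p R} {S : Matrix q m R}
    {D J : Matrix q q R}
    (hnull : ∀ (u : p → R) (w : q → R), A *ᵥ u + Sᵀ *ᵥ w = 0 → u = 0 ∧ Sᵀ *ᵥ w = 0)
    (hJfix : ∀ w : q → R, Sᵀ *ᵥ w = 0 → J *ᵥ w = w)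
    {y : m ⊕ (p ⊕ q) → R} (hx : y ∘ Sum.inl = 0) (hw : J *ᵥ (y ∘ Sum.inr ∘ Sum.inr) = 0)
    (hy : (saddlePointMatrix H A S D *ᵥ y) ∘ Sum.inl = 0) : y = 0 := by
  rw [saddlePointMatrix_mulVec_inl, hx, mulVec_zero, zero_add] at hy
  obtain ⟨hu, hSw⟩ := hnull _ _ hy
  rw [hJfix _ hSw] at hw
  ext (i | i | i)
  · exact congrFun hx i
  · exact congrFun hu i
  · exact congrFun hw i

theorem stmt10_general (m p q : ℕ)
    (H : Matrix (Fin m) (Fin m) ℝ) (hH : H.PosDef)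
    (A : Matrix (Fin m) (Fin p) ℝ) (Sb : Matrix (Fin q) (Fin m) ℝ)
    (J : Matrix (Fin q) (Fin q) ℝ)
    (hJsym : Jᵀ = J) (hJidem : J * J = J)
    (hJfix : ∀ w : Fin q → ℝ, Sbᵀ *ᵥ w = 0 → J *ᵥ w = w)
    (hnull : ∀ (u : Fin p → ℝ) (v : Fin q → ℝ),
      A *ᵥ u + Sbᵀ *ᵥ v = 0 → u = 0 ∧ Sbᵀ *ᵥ v = 0)
    (α : ℝ) (hα : 0 < α)
    (B : Matrix (Fin m ⊕ (Fin p ⊕ Fin q)) (Fin m ⊕ (Fin p ⊕ Fin q)) ℝ)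
    (hB : B = Matrix.fromBlocks H (Matrix.fromCols A Sbᵀ)
      (Matrix.fromRows (-Aᵀ) (-Sb)) (Matrix.fromBlocks 0 0 0 (α⁻¹ • J))) :
    ∀ (β : ℂ) (v : Fin m ⊕ (Fin p ⊕ Fin q) → ℂ), v ≠ 0 →
      (B.map Complex.ofReal) *ᵥ v = β • v → 0 < β.re := by
  intro β v hv hBv
  replace hB : B = saddlePointMatrix H A Sb (α⁻¹ • J) := hB
  subst hB
  have hD : (α⁻¹ • J).PosSemidef :=
    (posSemidef_of_transpose_eq_of_mul_self_eq hJsym hJidem).smul (inv_nonneg.2 hα.le)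
  have hJ : ∀ w, (α⁻¹ • J) *ᵥ w = 0 → J *ᵥ w = 0 := fun w hw => by
    simpa [smul_mulVec, hα.ne'] using hw
  have hre := re_mul_eq_of_map_ofReal_mulVec_eq_smul hBv
  have hBvr := mulVec_re_of_map_ofReal_mulVec_eq_smul hBv
  have hBvi := mulVec_im_of_map_ofReal_mulVec_eq_smul hBv
  set vr := Complex.re ∘ v
  set vi := Complex.im ∘ v
  by_contra! hβ
  have hQr := dotProduct_saddlePointMatrix_mulVec_nonneg A Sb hH.posSemidef hD vr
  have hQi := dotProduct_saddlePointMatrix_mulVec_nonneg A Sb hH.posSemidef hD vi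
  have hN : 0 ≤ vr ⬝ᵥ vr + vi ⬝ᵥ vi := by
    simpa using add_nonneg (dotProduct_self_star_nonneg vr) (dotProduct_self_star_nonneg vi)
  obtain ⟨hxr, hwr⟩ := eq_zero_of_dotProduct_saddlePointMatrix_mulVec_eq_zero A Sb hH hD
    (show vr ⬝ᵥ _ = 0 by nlinarith)
  obtain ⟨hxi, hwi⟩ := eq_zero_of_dotProduct_saddlePointMatrix_mulVec_eq_zero A Sb hH hD
    (show vi ⬝ᵥ _ = 0 by nlinarith)
  have hvr : vr = 0 := eq_zero_of_saddlePointMatrix_mulVec_inl_eq_zero hnull hJfix hxr (hJ _ hwr)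
    (by rw [hBvr]; change β.re • (vr ∘ Sum.inl) - β.im • (vi ∘ Sum.inl) = 0; simp [hxr, hxi])
  have hvi : vi = 0 := eq_zero_of_saddlePointMatrix_mulVec_inl_eq_zero hnull hJfix hxi (hJ _ hwi)
    (by rw [hBvi]; change β.im • (vr ∘ Sum.inl) + β.re • (vi ∘ Sum.inl) = 0; simp [hxr, hxi])
  exact hv (funext fun k => Complex.ext (congrFun hvr k) (congrFun hvi k))

/-- each eigenvalue of the block matrix
`B = [[H, A, S_boldᵀ], [−Aᵀ, 0, 0], [−S_bold, 0, (1/α) J]]` (with `H ≻ 0`,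
`J` the orthogonal projector onto `Null(S_boldᵀ)`, `α > 0`, and the nullspace
condition `A u + S_boldᵀ v = 0 ⇒ u = 0 ∧ v ∈ Null(S_boldᵀ)`) has positive
real part.  (The bottom-left block is the one actually used in the paper's
eigenvalue computation.) -/
theorem stmt10 (m p q : ℕ)
    (H : Matrix (Fin m) (Fin m) ℝ) (hH : H.PosDef)
    (A : Matrix (Fin m) (Fin p) ℝ) (Sb : Matrix (Fin q) (Fin m) ℝ)
    (J : Matrix (Fin q) (Fin q) ℝ)
    (hJsym : Jᵀ = J) (hJidem : J * J = J)
    (hJmem : ∀ w : Fin q → ℝ, Sbᵀ *ᵥ (J *ᵥ w) = 0)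
    (hJfix : ∀ w : Fin q → ℝ, Sbᵀ *ᵥ w = 0 → J *ᵥ w = w)
    (hnull : ∀ (u : Fin p → ℝ) (v : Fin q → ℝ),
      A *ᵥ u + Sbᵀ *ᵥ v = 0 → u = 0 ∧ Sbᵀ *ᵥ v = 0)
    (α : ℝ) (hα : 0 < α)
    (B : Matrix (Fin m ⊕ (Fin p ⊕ Fin q)) (Fin m ⊕ (Fin p ⊕ Fin q)) ℝ)
    (hB : B = Matrix.fromBlocks H (Matrix.fromCols A Sbᵀ)
      (Matrix.fromRows (-Aᵀ) (-Sb)) (Matrix.fromBlocks 0 0 0 (α⁻¹ • J))) :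
    ∀ (β : ℂ) (v : Fin m ⊕ (Fin p ⊕ Fin q) → ℂ), v ≠ 0 →
      (B.map Complex.ofReal) *ᵥ v = β • v → 0 < β.re :=
  stmt10_general m p q H hH A Sb J hJsym hJidem hJfix hnull α hα B hB
end

section
/- Let P, Q be symmetric matrices with P positive semidefinite, and suppose x'Qx > 0 for all nonzero x with Px = 0. Then there exists c̄ > 0 such that Q + cP is positive definite for all c ≥ c̄. -/
open Matrix Filter Metric

/-- The open sets `{f + k g > 0}`, `k ∈ ℕ`, cover `K` (where `g = 0` by hypothesis, elsewhere for
large `k`), so finitely many do; as `g ≥ 0` on `K`, positivity of `f + c g` persists as `c` grows. -/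
theorem IsCompact.eventually_forall_pos_add_mul {X : Type*} [TopologicalSpace X] {K : Set X}
    (hK : IsCompact K) {f g : X → ℝ} (hf : Continuous f) (hg : Continuous g)
    (hg_nonneg : ∀ x ∈ K, 0 ≤ g x) (hfg : ∀ x ∈ K, g x = 0 → 0 < f x) :
    ∀ᶠ c in atTop, ∀ x ∈ K, 0 < f x + c * g x := by
  let U : ℕ → Set X := fun k => {x | 0 < f x + k * g x}
  have hU_open (k : ℕ) : IsOpen (U k) :=
    isOpen_lt continuous_const (hf.add (continuous_const.mul hg))
  have hK_cover : K ⊆ ⋃ k, U k := by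
    intro x hx
    rcases (hg_nonneg x hx).eq_or_lt with hgx | hgx
    · exact Set.mem_iUnion.2 ⟨0, by simpa [U, ← hgx] using hfg x hx hgx.symm⟩
    · obtain ⟨k, hk⟩ := exists_nat_gt (-f x / g x)
      refine Set.mem_iUnion.2 ⟨k, ?_⟩
      have := (div_lt_iff₀ hgx).1 hk
      simp only [U, Set.mem_ofPred_eq]
      linarith
  obtain ⟨t, ht⟩ := hK.elim_finite_subcover U hU_open hK_cover
  refine eventually_atTop.2 ⟨((t.sup id : ℕ) : ℝ), fun c hc x hx => ?_⟩
  obtain ⟨k, hkt, hxk⟩ := Set.mem_iUnion₂.1 (ht hx)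
  have hkc : (k : ℝ) ≤ c := le_trans (by exact_mod_cast t.le_sup (f := id) hkt) hc
  have : 0 < f x + k * g x := hxk
  nlinarith [hg_nonneg x hx]

theorem Matrix.posDef_of_forall_norm_eq_one {ι : Type*} [Fintype ι] {M : Matrix ι ι ℝ}
    (hM : M.IsHermitian) (h : ∀ x : ι → ℝ, ‖x‖ = 1 → 0 < x ⬝ᵥ (M *ᵥ x)) : M.PosDef := by
  refine .of_dotProduct_mulVec_pos hM fun x hx => ?_
  have hx_norm : 0 < ‖x‖ := norm_pos_iff.2 hx
  have hx_eq : x = ‖x‖ • (‖x‖⁻¹ • x) := by rw [smul_smul, mul_inv_cancel₀ hx_norm.ne', one_smul]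
  have hy := h (‖x‖⁻¹ • x) (by rw [norm_smul, norm_inv, norm_norm, inv_mul_cancel₀ hx_norm.ne'])
  rw [star_trivial, hx_eq, mulVec_smul, smul_dotProduct, dotProduct_smul, smul_eq_mul, smul_eq_mul]
  positivity

/-- if `P ⪰ 0`, `Q` symmetric, and `xᵀQx > 0` for every nonzero
`x` with `Px = 0`, then `Q + cP ≻ 0` for all sufficiently large `c`. -/
theorem stmt12 (n : ℕ) (P Q : Matrix (Fin n) (Fin n) ℝ)
    (hP : P.PosSemidef) (hQ : Q.IsHermitian)
    (h : ∀ x : Fin n → ℝ, x ≠ 0 → P *ᵥ x = 0 → 0 < x ⬝ᵥ (Q *ᵥ x)) :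
    ∃ cbar > (0 : ℝ), ∀ c ≥ cbar, (Q + c • P).PosDef := by
  have hP_nonneg (x : Fin n → ℝ) : 0 ≤ x ⬝ᵥ (P *ᵥ x) := hP.dotProduct_mulVec_nonneg x
  have hQ_pos : ∀ x ∈ sphere (0 : Fin n → ℝ) 1, x ⬝ᵥ (P *ᵥ x) = 0 → 0 < x ⬝ᵥ (Q *ᵥ x) :=
    fun x hx hPx => h x (ne_zero_of_mem_unit_sphere ⟨x, hx⟩)
      ((hP.dotProduct_mulVec_zero_iff x).1 hPx)
  obtain ⟨c₀, hc₀⟩ := eventually_atTop.1 <|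
    (isCompact_sphere (0 : Fin n → ℝ) 1).eventually_forall_pos_add_mul (by fun_prop) (by fun_prop)
      (fun x _ => hP_nonneg x) hQ_pos
  refine ⟨max c₀ 1, by positivity, fun c hc => ?_⟩
  refine posDef_of_forall_norm_eq_one (hQ.add (hP.isHermitian.smul (.all c))) fun x hx => ?_
  rw [add_mulVec, smul_mulVec, dotProduct_add, dotProduct_smul, smul_eq_mul]
  exact hc₀ c (le_of_max_le_left hc) x (mem_sphere_zero_iff_norm.2 hx)
end

section
/- Consider the fixed-point map M_α(x, μ, λ̃) = (x − α∇_x L(x,μ,λ̃), μ + α∇_μ L(x,μ,λ̃), (I−J)λ̃ + α∇_λ L(x,μ,λ̃)) where L(x,μ,λ) = F(x) + μ'h_bold(x) + λ'S_bold·x and J is the orthogonal projector onto Null(S_bold'). If (x*, μ*, λ*) with λ* ∈ Range(S_bold) satisfies the first-order conditions and ∇²_xx L(x*,μ*,λ*) ≻ 0, then the Jacobian of M_α at (x*,μ*,λ*) equals I − αB where B = [[∇²_xx L(x*,μ*,λ*), ∇h_bold(x*), S_bold'], [−∇h_bold(x*)', 0, 0], [−S_bold, 0, (1/α)J]], and there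 exists ᾱ > 0 such that for all α ∈ (0, ᾱ] the spectral radius of I − αB is strictly less than 1. -/
/-!
The fixed-point map is `z ↦ (1 - P) z - α G z`, where `G = (∇ₓL, -∇_μL, -∇_λL)` is the saddle
field of the Lagrangian and `P` applies `J` to the `λ`-block, so its Jacobian is
`1 - P - α C = 1 - α B` with `C = [[∇²ₓₓL, E], [-Eᵀ, 0]]`, `E = [∇h, Sᵀ]`.

Since `J` is a projector with `J S = 0`, we have `P C = 0` and `P² = P`; hence an eigenvector `v`
of `1 - P - α C` for an eigenvalue `β ≠ 0` satisfies `P v = 0` and is an eigenvector of `C` for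
`γ = (1 - β) / α`. Its `x`-block is nonzero by the constraint qualification, and then the
skew-symmetry of the off-diagonal blocks of `C` gives `Re γ · ‖v‖² = Re (xᴴ ∇²ₓₓL x) > 0`. Finally
`|1 - α γ| < 1` as soon as `α |γ|² < 2 Re γ`, and `C` has finitely many eigenvalues.
-/

open Matrix

/-- The gradient vector of `g : (ι → ℝ) → ℝ` at `x`. -/
noncomputable def gradVec {ι : Type*} [Fintype ι] [DecidableEq ι]
    (g : (ι → ℝ) → ℝ) (x : ι → ℝ) : ι → ℝ :=
  fun p => fderiv ℝ g x (Pi.single p 1)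

/-- The Hessian matrix of `g : (ι → ℝ) → ℝ` at `x`. -/
noncomputable def hessMat {ι : Type*} [Fintype ι] [DecidableEq ι]
    (g : (ι → ℝ) → ℝ) (x : ι → ℝ) : Matrix ι ι ℝ :=
  Matrix.of fun p r => fderiv ℝ (fun y => fderiv ℝ g y (Pi.single r 1)) x (Pi.single p 1)

section LinearAlgebra

namespace Matrix

variable {m n : Type*} [Fintype n]

noncomputable def mulVecCLM (M : Matrix m n ℝ) : (n → ℝ) →L[ℝ] m → ℝ :=
  LinearMap.toContinuousLinearMap M.mulVecLin

@[simp]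
lemma mulVecCLM_apply (M : Matrix m n ℝ) (v : n → ℝ) : M.mulVecCLM v = M *ᵥ v := rfl

lemma map_ofReal_mulVec_eq_zero_iff {M : Matrix m n ℝ} {y : n → ℂ} :
    M.map Complex.ofReal *ᵥ y = 0 ↔
      M *ᵥ (fun j => (y j).re) = 0 ∧ M *ᵥ (fun j => (y j).im) = 0 := by
  simp only [funext_iff, Complex.ext_iff, mulVec, dotProduct, map_apply, Complex.re_sum,
    Complex.im_sum, Complex.mul_re, Complex.mul_im, Complex.ofReal_re, Complex.ofReal_im, zero_mul,
    sub_zero, add_zero, Pi.zero_apply, Complex.zero_re, Complex.zero_im]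
  exact forall_and

lemma re_star_dotProduct_map_ofReal_mulVec (H : Matrix n n ℝ) (x : n → ℂ) :
    (star x ⬝ᵥ (H.map Complex.ofReal *ᵥ x)).re
      = (fun i => (x i).re) ⬝ᵥ (H *ᵥ fun i => (x i).re)
        + (fun i => (x i).im) ⬝ᵥ (H *ᵥ fun i => (x i).im) := by
  simp only [dotProduct, mulVec, Complex.re_sum, Finset.mul_sum, ← Finset.sum_add_distrib,
    map_apply, Pi.star_apply, RCLike.star_def, Complex.mul_re, Complex.conj_re, Complex.conj_im,
    Complex.mul_im, Complex.ofReal_re, Complex.ofReal_im]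
  refine Finset.sum_congr rfl fun i _ => Finset.sum_congr rfl fun j _ => ?_
  ring

lemma PosDef.re_star_dotProduct_map_ofReal_mulVec_pos {H : Matrix n n ℝ} (hH : H.PosDef)
    {x : n → ℂ} (hx : x ≠ 0) : 0 < RCLike.re (star x ⬝ᵥ (H.map Complex.ofReal *ᵥ x)) := by
  rw [RCLike.re_to_complex, re_star_dotProduct_map_ofReal_mulVec]
  have hre := hH.posSemidef.dotProduct_mulVec_nonneg (fun i => (x i).re)
  have him := hH.posSemidef.dotProduct_mulVec_nonneg (fun i => (x i).im)
  simp only [star_trivial] at hre him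
  by_cases h : (fun i => (x i).re) = 0
  · have h' : (fun i => (x i).im) ≠ 0 := fun h' =>
      hx (funext fun i => Complex.ext (congrFun h i) (congrFun h' i))
    simpa [h] using hH.dotProduct_mulVec_pos h'
  · have := hH.dotProduct_mulVec_pos h
    simp only [star_trivial] at this
    linarith

lemma one_sub_smul_add_inv_smul {K ι : Type*} [Field K] [DecidableEq ι] (C P : Matrix ι ι K)
    {α : K} (hα : α ≠ 0) :
    1 - α • (C + α⁻¹ • P) = 1 - P - α • C := by
  rw [smul_add, smul_smul, mul_inv_cancel₀ hα, one_smul]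
  abel

lemma mulVec_eq_zero_and_smul_mulVec_eq_of_mulVec_eq_smul {K ι : Type*} [Field K] [Fintype ι]
    [DecidableEq ι] {P C : Matrix ι ι K}
    (hPC : P * C = 0) (hPP : P * P = P) {α β : K} (hβ : β ≠ 0) {v : ι → K}
    (hv : (1 - P - α • C) *ᵥ v = β • v) : P *ᵥ v = 0 ∧ α • (C *ᵥ v) = (1 - β) • v := by
  have hP : β • (P *ᵥ v) = 0 := by
    rw [← mulVec_smul, ← hv, mulVec_mulVec, mul_sub, mul_sub, mul_one, hPP, mul_smul_comm, hPC,
      smul_zero, sub_self, sub_zero, zero_mulVec]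
  have hPv : P *ᵥ v = 0 := (smul_eq_zero.1 hP).resolve_left hβ
  refine ⟨hPv, ?_⟩
  rw [sub_mulVec, sub_mulVec, one_mulVec, hPv, smul_mulVec] at hv
  rw [sub_smul, one_smul, ← hv]
  abel

end Matrix

lemma ContinuousLinearMap.apply_eq_dotProduct {n : Type*} [Fintype n] [DecidableEq n]
    (φ : (n → ℝ) →L[ℝ] ℝ) (d : n → ℝ) : φ d = (fun r => φ (Pi.single r 1)) ⬝ᵥ d := by
  conv_lhs => rw [← Finset.univ_sum_single d]
  simp only [map_sum, dotProduct]
  refine Finset.sum_congr rfl fun r _ => ?_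
  rw [mul_comm, ← smul_eq_mul, ← map_smul, ← Pi.single_smul', smul_eq_mul, mul_one]

def saddleMatrix {n k : Type*} (H : Matrix n n ℝ) (E : Matrix n k ℝ) :
    Matrix (n ⊕ k) (n ⊕ k) ℝ :=
  fromBlocks H E (-Eᵀ) 0

lemma saddleMatrix_map_ofReal {n k : Type*} (H : Matrix n n ℝ) (E : Matrix n k ℝ) :
    (saddleMatrix H E).map Complex.ofReal
      = fromBlocks (H.map Complex.ofReal) (E.map Complex.ofReal) (-(E.map Complex.ofReal)ᴴ) 0 := by
  rw [saddleMatrix, fromBlocks_map]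
  congr 1
  ext i j
  simp

end LinearAlgebra

section Calculus

variable {n : Type*} [Fintype n] [DecidableEq n] {g : (n → ℝ) → ℝ} {x : n → ℝ}

lemma hessMat_apply (hg : ContDiff ℝ 2 g) (p r : n) :
    hessMat g x p r = fderiv ℝ (fderiv ℝ g) x (Pi.single p 1) (Pi.single r 1) := by
  have hdiff : DifferentiableAt ℝ (fderiv ℝ g) x :=
    (hg.fderiv_right (m := 1) le_rfl).differentiable one_ne_zero x
  simp [hessMat, fderiv_clm_apply hdiff (differentiableAt_const _)]

lemma hessMat_transpose (hg : ContDiff ℝ 2 g) : (hessMat g x)ᵀ = hessMat g x := by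
  ext p r
  rw [transpose_apply, hessMat_apply hg, hessMat_apply hg]
  exact (hg.contDiffAt.isSymmSndFDerivAt (by simp)) _ _

lemma hasFDerivAt_gradVec (hg : ContDiff ℝ 2 g) (x : n → ℝ) :
    HasFDerivAt (gradVec g) (hessMat g x).mulVecCLM x := by
  have hdiff : HasFDerivAt (fderiv ℝ g) (fderiv ℝ (fderiv ℝ g) x) x :=
    ((hg.fderiv_right (m := 1) le_rfl).differentiable one_ne_zero x).hasFDerivAt
  refine hasFDerivAt_pi'.2 fun p => ?_
  convert hdiff.clm_apply (hasFDerivAt_const (Pi.single p (1 : ℝ)) x) using 1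
  · rfl
  ext d
  rw [← hessMat_transpose hg]
  simp only [ContinuousLinearMap.coe_comp, Function.comp_apply, ContinuousLinearMap.proj_apply,
    mulVecCLM_apply, mulVec, transpose_apply, hessMat_apply hg,
    ContinuousLinearMap.comp_zero, zero_add]
  exact ((fderiv ℝ (fderiv ℝ g) x).flip (Pi.single p 1)).apply_eq_dotProduct d |>.symm

lemma hasFDerivAt_precomp {ι κ : Type*} [Fintype ι] [Fintype κ] (f : κ → ι) (z : ι → ℝ) :
    HasFDerivAt (fun y : ι → ℝ => y ∘ f)
      (ContinuousLinearMap.pi fun k => ContinuousLinearMap.proj (R := ℝ) (f k)) z :=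
  hasFDerivAt_pi (φ := fun k (y : ι → ℝ) => y (f k)) |>.2 fun _ => hasFDerivAt_apply _ _

lemma HasFDerivAt.sumElim {ι κ m : Type*} [Fintype ι] [Fintype κ] [Fintype m]
    {f : (m → ℝ) → ι → ℝ} {g : (m → ℝ) → κ → ℝ} {M₁ : Matrix ι m ℝ} {M₂ : Matrix κ m ℝ}
    {z : m → ℝ} (hf : HasFDerivAt f M₁.mulVecCLM z) (hg : HasFDerivAt g M₂.mulVecCLM z) :
    HasFDerivAt (fun y => Sum.elim (f y) (g y)) (fromRows M₁ M₂).mulVecCLM z := by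
  refine hasFDerivAt_pi'.2 fun j => ?_
  rcases j with i | k
  · exact (hasFDerivAt_apply i _).comp z hf
  · exact (hasFDerivAt_apply k _).comp z hg

end Calculus

section Lagrangian

variable {n c l : Type*} [Fintype n] [DecidableEq n] [Fintype c] [Fintype l]
  {F : (n → ℝ) → ℝ} {h : c → (n → ℝ) → ℝ} {S : Matrix l n ℝ}

def lagrangian (F : (n → ℝ) → ℝ) (h : c → (n → ℝ) → ℝ) (S : Matrix l n ℝ) (μ : c → ℝ)
    (ν : l → ℝ) (x : n → ℝ) : ℝ :=
  F x + ∑ i, μ i * h i x + ν ⬝ᵥ (S *ᵥ x)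

omit [DecidableEq n] in
lemma contDiff_lagrangian (hF : ContDiff ℝ 2 F) (hh : ∀ i, ContDiff ℝ 2 (h i)) (μ : c → ℝ)
    (ν : l → ℝ) : ContDiff ℝ 2 (lagrangian F h S μ ν) := by
  have hlin : ContDiff ℝ 2 fun x => ν ⬝ᵥ (S *ᵥ x) := by
    simp only [dotProduct, mulVec]
    fun_prop
  unfold lagrangian
  fun_prop

lemma gradVec_lagrangian (hF : Differentiable ℝ F) (hh : ∀ i, Differentiable ℝ (h i))
    (μ : c → ℝ) (ν : l → ℝ) (x : n → ℝ) :
    gradVec (lagrangian F h S μ ν) x = gradVec F x + ∑ i, μ i • gradVec (h i) x + Sᵀ *ᵥ ν := by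
  let φ : (n → ℝ) →L[ℝ] ℝ :=
    LinearMap.toContinuousLinearMap ((dotProductBilin ℝ ℝ ν).comp S.mulVecLin)
  have hL : HasFDerivAt (lagrangian F h S μ ν)
      (fderiv ℝ F x + ∑ i, μ i • fderiv ℝ (h i) x + φ) x :=
    ((hF x).hasFDerivAt.add (HasFDerivAt.fun_sum fun i _ =>
      ((hh i x).hasFDerivAt.const_mul (μ i)))).add φ.hasFDerivAt
  ext p
  simp only [gradVec, hL.fderiv, _root_.add_apply, _root_.sum_apply, _root_.smul_apply,
    smul_eq_mul, LinearMap.coe_toContinuousLinearMap', LinearMap.coe_comp, Function.comp_apply,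
    mulVecBilin_apply, mulVec_single, MulOpposite.op_one, one_smul, dotProductBilin_apply_apply,
    Pi.add_apply, Finset.sum_apply, Pi.smul_apply, add_right_inj, φ]
  exact dotProduct_comm _ _

noncomputable def gradLagrangian (F : (n → ℝ) → ℝ) (h : c → (n → ℝ) → ℝ) (S : Matrix l n ℝ)
    (z : n ⊕ (c ⊕ l) → ℝ) : n → ℝ :=
  gradVec F (z ∘ .inl) + ∑ i, z (.inr (.inl i)) • gradVec (h i) (z ∘ .inl)
    + Sᵀ *ᵥ (z ∘ .inr ∘ .inr)

/-- `(∇ₓL, -∇_μL, -∇_λL)` at `z = (x, μ, λ)`. -/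
noncomputable def saddleField (F : (n → ℝ) → ℝ) (h : c → (n → ℝ) → ℝ) (S : Matrix l n ℝ)
    (z : n ⊕ (c ⊕ l) → ℝ) : n ⊕ (c ⊕ l) → ℝ :=
  Sum.elim (gradLagrangian F h S z) (Sum.elim (fun i => -h i (z ∘ .inl)) (-(S *ᵥ (z ∘ .inl))))

/-- The map `M_α(x, μ, λ) = (x - α ∇ₓL, μ + α ∇_μL, (1 - J) λ + α ∇_λL)`. -/
noncomputable def fixedPointMap [DecidableEq c] [DecidableEq l] (F : (n → ℝ) → ℝ)
    (h : c → (n → ℝ) → ℝ) (S : Matrix l n ℝ) (J : Matrix l l ℝ) (α : ℝ)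
    (z : n ⊕ (c ⊕ l) → ℝ) : n ⊕ (c ⊕ l) → ℝ :=
  (1 - fromBlocks 0 0 0 (fromBlocks 0 0 0 J)) *ᵥ z - α • saddleField F h S z

noncomputable def constraintJacobian (h : c → (n → ℝ) → ℝ) (S : Matrix l n ℝ) (x : n → ℝ) :
    Matrix n (c ⊕ l) ℝ :=
  fromCols (of fun p i => gradVec (h i) x p) Sᵀ

lemma constraintJacobian_mulVec (x : n → ℝ) (y : c ⊕ l → ℝ) :
    constraintJacobian h S x *ᵥ y = ∑ i, y (.inl i) • gradVec (h i) x + Sᵀ *ᵥ (y ∘ .inr) := by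
  ext p
  simp [constraintJacobian, mulVec, dotProduct, Finset.sum_apply, mul_comm]

lemma fromBlocks_mul_transpose_constraintJacobian {J : Matrix l l ℝ} (hJS : J * S = 0)
    (x : n → ℝ) : fromBlocks (0 : Matrix c c ℝ) 0 0 J * (constraintJacobian h S x)ᵀ = 0 := by
  simp [constraintJacobian, transpose_fromCols, ← fromRows_fromCols_eq_fromBlocks,
    fromCols_mul_fromRows, hJS]

lemma eq_zero_of_constraintJacobian_mulVec_eq_zero {x : n → ℝ} {J : Matrix l l ℝ}
    (hnull : ∀ (u : c → ℝ) (v : l → ℝ),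
      (∑ i, u i • gradVec (h i) x) + Sᵀ *ᵥ v = 0 → u = 0 ∧ Sᵀ *ᵥ v = 0)
    (hJfix : ∀ w : l → ℝ, Sᵀ *ᵥ w = 0 → J *ᵥ w = w) {y : c ⊕ l → ℝ}
    (hEy : constraintJacobian h S x *ᵥ y = 0) (hJy : fromBlocks (0 : Matrix c c ℝ) 0 0 J *ᵥ y = 0) :
    y = 0 := by
  obtain ⟨hu, hSw⟩ := hnull (y ∘ .inl) (y ∘ .inr) (by rwa [constraintJacobian_mulVec] at hEy)
  have hJw : J *ᵥ (y ∘ .inr) = 0 := by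
    simpa [fromBlocks_mulVec] using congrArg (· ∘ Sum.inr) hJy
  ext (i | k)
  · exact congrFun hu i
  · exact (congrFun (hJfix _ hSw) k).symm.trans (congrFun hJw k)

theorem hasFDerivAt_gradLagrangian (hF : ContDiff ℝ 2 F) (hh : ∀ i, ContDiff ℝ 2 (h i))
    (z : n ⊕ (c ⊕ l) → ℝ) :
    HasFDerivAt (gradLagrangian F h S)
      (fromCols (hessMat (lagrangian F h S (z ∘ .inr ∘ .inl) (z ∘ .inr ∘ .inr)) (z ∘ .inl))
        (constraintJacobian h S (z ∘ .inl))).mulVecCLM z := by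
  set x₀ := z ∘ .inl
  set μ₀ : c → ℝ := z ∘ .inr ∘ .inl
  set ν₀ : l → ℝ := z ∘ .inr ∘ .inr
  set L₀ := lagrangian F h S μ₀ ν₀
  -- With the multipliers frozen at those of `z`, `∇ₓL` is `∇L₀` plus a product whose scalar factor
  -- vanishes at `z`; so that product contributes only through the multiplier direction.
  have hsplit : gradLagrangian F h S = fun y => gradVec L₀ (y ∘ .inl)
      + ∑ i, (y (.inr (.inl i)) - μ₀ i) • gradVec (h i) (y ∘ .inl)
      + Sᵀ *ᵥ (y ∘ .inr ∘ .inr - ν₀) := by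
    funext y
    rw [gradVec_lagrangian (hF.differentiable two_ne_zero)
      fun i => (hh i).differentiable two_ne_zero]
    simp only [gradLagrangian, sub_smul, Finset.sum_sub_distrib, mulVec_sub]
    abel
  have hx := hasFDerivAt_precomp (Sum.inl : n → n ⊕ (c ⊕ l)) z
  have hν := hasFDerivAt_precomp (Sum.inr ∘ Sum.inr : l → n ⊕ (c ⊕ l)) z
  have hL := (hasFDerivAt_gradVec (contDiff_lagrangian (S := S) hF hh μ₀ ν₀) x₀).comp z hx
  have hmult := HasFDerivAt.fun_sum (u := Finset.univ) fun i _ =>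
    ((hasFDerivAt_apply (.inr (.inl i)) z).sub_const (μ₀ i)).smul
      ((hasFDerivAt_gradVec (hh i) x₀).comp z hx)
  rw [hsplit]
  refine ((hL.add hmult).add (Sᵀ.mulVecCLM.hasFDerivAt.comp z (hν.sub_const ν₀))).congr_fderiv ?_
  ext d p
  have hμ : ∀ i, z (.inr (.inl i)) = μ₀ i := fun _ => rfl
  simp [constraintJacobian, hμ, mulVec, dotProduct, add_assoc, mul_comm (d _), L₀, x₀]

theorem hasFDerivAt_saddleField (hF : ContDiff ℝ 2 F) (hh : ∀ i, ContDiff ℝ 2 (h i))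
    (z : n ⊕ (c ⊕ l) → ℝ) :
    HasFDerivAt (saddleField F h S)
      (saddleMatrix (hessMat (lagrangian F h S (z ∘ .inr ∘ .inl) (z ∘ .inr ∘ .inr)) (z ∘ .inl))
        (constraintJacobian h S (z ∘ .inl))).mulVecCLM z := by
  have hx := hasFDerivAt_precomp (Sum.inl : n → n ⊕ (c ⊕ l)) z
  have hcons : HasFDerivAt (fun y i => -h i (y ∘ .inl))
      (fromCols (-(of fun p i => gradVec (h i) (z ∘ .inl) p)ᵀ)
        (0 : Matrix c (c ⊕ l) ℝ)).mulVecCLM z := by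
    refine hasFDerivAt_pi'.2 fun i => ?_
    refine ((((hh i).differentiable two_ne_zero _).hasFDerivAt.comp z hx).neg).congr_fderiv ?_
    ext d
    rw [_root_.neg_apply, ContinuousLinearMap.comp_apply,
      ContinuousLinearMap.apply_eq_dotProduct]
    simp [mulVec, dotProduct, gradVec, mul_comm]
  have hlin : HasFDerivAt (fun y => -(S *ᵥ (y ∘ .inl)))
      (fromCols (-S) (0 : Matrix l (c ⊕ l) ℝ)).mulVecCLM z := by
    refine ((-S).mulVecCLM.hasFDerivAt.comp z hx).congr_fderiv ?_ |>.congr_of_eventuallyEq ?_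
    · ext d k
      simp [mulVec, dotProduct]
    · exact Filter.Eventually.of_forall fun y => by simp [neg_mulVec]
  refine ((hasFDerivAt_gradLagrangian hF hh z).sumElim (hcons.sumElim hlin)).congr_fderiv ?_
  congr 1
  ext (p | i | k) (r | j | k') <;> simp [saddleMatrix, constraintJacobian]

theorem hasFDerivAt_fixedPointMap [DecidableEq c] [DecidableEq l] (hF : ContDiff ℝ 2 F)
    (hh : ∀ i, ContDiff ℝ 2 (h i)) (J : Matrix l l ℝ) {α : ℝ} (hα : α ≠ 0) (z : n ⊕ (c ⊕ l) → ℝ) :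
    HasFDerivAt (fixedPointMap F h S J α)
      (1 - α • (saddleMatrix
        (hessMat (lagrangian F h S (z ∘ .inr ∘ .inl) (z ∘ .inr ∘ .inr)) (z ∘ .inl))
        (constraintJacobian h S (z ∘ .inl))
          + α⁻¹ • fromBlocks 0 0 0 (fromBlocks 0 0 0 J))).mulVecCLM z := by
  rw [one_sub_smul_add_inv_smul _ _ hα]
  refine ((mulVecCLM (1 - fromBlocks 0 0 0 (fromBlocks 0 0 0 J))).hasFDerivAt.sub
    ((hasFDerivAt_saddleField (S := S) hF hh z).const_smul α)).congr_fderiv ?_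
  ext d
  simp [sub_mulVec, smul_mulVec]

end Lagrangian

section Spectral

open scoped ComplexOrder

lemma re_pos_of_fromBlocks_mulVec_eq_smul {𝕜 n k : Type*} [RCLike 𝕜] [Fintype n] [Fintype k]
    {H : Matrix n n 𝕜} (hH : ∀ x ≠ 0, 0 < RCLike.re (star x ⬝ᵥ (H *ᵥ x))) (E : Matrix n k 𝕜)
    {γ : 𝕜} {x : n → 𝕜} {y : k → 𝕜} (hx : x ≠ 0)
    (hxy : fromBlocks H E (-Eᴴ) 0 *ᵥ Sum.elim x y = γ • Sum.elim x y) :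
    0 < RCLike.re γ := by
  have h₁ : H *ᵥ x + E *ᵥ y = γ • x := by
    simpa [fromBlocks_mulVec, Pi.smul_comp] using congrArg (· ∘ Sum.inl) hxy
  have h₂ : -(Eᴴ *ᵥ x) = γ • y := by
    simpa [fromBlocks_mulVec, Pi.smul_comp, neg_mulVec] using congrArg (· ∘ Sum.inr) hxy
  have hskew : star y ⬝ᵥ (Eᴴ *ᵥ x) = star (star x ⬝ᵥ (E *ᵥ y)) := by
    rw [star_dotProduct, star_mulVec, ← dotProduct_mulVec, conjTranspose_conjTranspose]
  have key : star x ⬝ᵥ (H *ᵥ x) + (star x ⬝ᵥ (E *ᵥ y) - star (star x ⬝ᵥ (E *ᵥ y)))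
      = γ * (star x ⬝ᵥ x + star y ⬝ᵥ y) := by
    have e₁ := congrArg (star x ⬝ᵥ ·) h₁
    have e₂ := congrArg (star y ⬝ᵥ ·) h₂
    simp only [dotProduct_add, dotProduct_smul, dotProduct_neg, smul_eq_mul] at e₁ e₂
    rw [← hskew]
    linear_combination e₁ + e₂
  have hs : 0 ≤ star x ⬝ᵥ x + star y ⬝ᵥ y :=
    add_nonneg (dotProduct_star_self_nonneg x) (dotProduct_star_self_nonneg y)
  have hre := congrArg RCLike.re key
  rw [map_add, map_sub, RCLike.star_def, RCLike.conj_re, sub_self, add_zero, RCLike.mul_re,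
    (RCLike.nonneg_iff.1 hs).2, mul_zero, sub_zero] at hre
  nlinarith [hH x hx, (RCLike.nonneg_iff.1 hs).1]

theorem re_pos_of_saddleMatrix_mulVec_eq_smul {n k : Type*} [Fintype n] [Fintype k]
    {H : Matrix n n ℝ} (hH : H.PosDef) {E : Matrix n k ℝ} {Q : Matrix k k ℝ}
    (hker : ∀ y, E *ᵥ y = 0 → Q *ᵥ y = 0 → y = 0) {γ : ℂ} {v : n ⊕ k → ℂ} (hv : v ≠ 0)
    (hQv : (fromBlocks 0 0 0 Q : Matrix (n ⊕ k) (n ⊕ k) ℝ).map Complex.ofReal *ᵥ v = 0)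
    (hγ : (saddleMatrix H E).map Complex.ofReal *ᵥ v = γ • v) : 0 < γ.re := by
  rw [saddleMatrix_map_ofReal, ← Sum.elim_comp_inl_inr v] at hγ
  rw [← Sum.elim_comp_inl_inr v] at hQv hv
  refine re_pos_of_fromBlocks_mulVec_eq_smul
    (fun x hx => hH.re_star_dotProduct_map_ofReal_mulVec_pos hx) _ (fun hx => hv ?_) hγ
  have hEy : E.map Complex.ofReal *ᵥ (v ∘ Sum.inr) = 0 := by
    simpa [fromBlocks_mulVec, hx, Pi.smul_comp] using congrArg (· ∘ Sum.inl) hγ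
  have hQy : Q.map Complex.ofReal *ᵥ (v ∘ Sum.inr) = 0 := by
    simpa [fromBlocks_map, fromBlocks_mulVec] using congrArg (· ∘ Sum.inr) hQv
  rw [map_ofReal_mulVec_eq_zero_iff] at hEy hQy
  have hy : v ∘ Sum.inr = 0 := funext fun j => Complex.ext
    (congrFun (hker _ hEy.1 hQy.1) j) (congrFun (hker _ hEy.2 hQy.2) j)
  rw [hx, hy]
  ext (_ | _) <;> rfl

lemma Set.Finite.exists_pos_forall_norm_one_sub_mul_lt_one {s : Set ℂ} (hs : s.Finite) :
    ∃ αbar > (0 : ℝ), ∀ α : ℝ, 0 < α → α ≤ αbar → ∀ γ ∈ s, 0 < γ.re → ‖1 - α * γ‖ < 1 := by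
  have hev : ∀ᶠ α : ℝ in nhdsWithin 0 (Set.Ioi 0), ∀ γ ∈ s, 0 < γ.re → ‖1 - α * γ‖ < 1 := by
    refine (Filter.eventually_all_finite hs).2 fun γ _ => ?_
    by_cases hγ : 0 < γ.re
    · have hγ0 : 0 < Complex.normSq γ := Complex.normSq_pos.2 fun h => by simp [h] at hγ
      filter_upwards [Ioo_mem_nhdsGT (div_pos hγ hγ0)] with α ⟨hα, hαγ⟩ _
      rw [lt_div_iff₀ hγ0] at hαγ
      rw [← sq_lt_one_iff₀ (norm_nonneg _), Complex.sq_norm, Complex.normSq_apply]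
      simp only [Complex.sub_re, Complex.sub_im, Complex.one_re, Complex.one_im, Complex.mul_re,
        Complex.mul_im, Complex.ofReal_re, Complex.ofReal_im, Complex.normSq_apply] at hαγ ⊢
      nlinarith
    · exact Filter.Eventually.of_forall fun _ h => absurd h hγ
  obtain ⟨αbar, hαbar, hsub⟩ := mem_nhdsGT_iff_exists_Ioc_subset.1 hev
  exact ⟨αbar, hαbar, fun α hα hαle => hsub ⟨hα, hαle⟩⟩

theorem exists_pos_forall_norm_lt_one_of_saddleMatrix {n k : Type*} [Fintype n] [Fintype k]
    [DecidableEq n] [DecidableEq k] {H : Matrix n n ℝ} (hH : H.PosDef) (E : Matrix n k ℝ)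
    {Q : Matrix k k ℝ} (hQQ : Q * Q = Q) (hQE : Q * Eᵀ = 0)
    (hker : ∀ y, E *ᵥ y = 0 → Q *ᵥ y = 0 → y = 0) :
    ∃ αbar > (0 : ℝ), ∀ α : ℝ, 0 < α → α ≤ αbar → ∀ (β : ℂ) (v : n ⊕ k → ℂ), v ≠ 0 →
      (1 - α • (saddleMatrix H E + α⁻¹ • fromBlocks 0 0 0 Q)).map Complex.ofReal *ᵥ v = β • v →
      ‖β‖ < 1 := by
  set C := (saddleMatrix H E).map Complex.ofReal
  set P := (fromBlocks 0 0 0 Q : Matrix (n ⊕ k) (n ⊕ k) ℝ).map Complex.ofReal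
  obtain ⟨αbar, hαbar, hsmall⟩ :=
    (Module.End.finite_hasEigenvalue (toLin' C)).exists_pos_forall_norm_one_sub_mul_lt_one
  refine ⟨αbar, hαbar, fun α hα hαle β v hv hβv => ?_⟩
  rcases eq_or_ne β 0 with rfl | hβ
  · simp
  have hαC : (α : ℂ) ≠ 0 := Complex.ofReal_ne_zero.2 hα.ne'
  have hmap_mul : ∀ M N : Matrix (n ⊕ k) (n ⊕ k) ℝ,
      (M * N).map Complex.ofReal = M.map Complex.ofReal * N.map Complex.ofReal :=
    fun M N => Matrix.map_mul (f := Complex.ofRealHom)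
  have hPC : P * C = 0 := by simp [P, C, ← hmap_mul, saddleMatrix, fromBlocks_multiply, hQE]
  have hPP : P * P = P := by simp [P, ← hmap_mul, fromBlocks_multiply, hQQ]
  have hmat : (1 - α • (saddleMatrix H E + α⁻¹ • fromBlocks 0 0 0 Q)).map Complex.ofReal
      = 1 - P - (α : ℂ) • C := by
    rw [one_sub_smul_add_inv_smul _ _ hα.ne']
    ext i j
    simp [P, C, one_apply, apply_ite Complex.ofReal]
  rw [hmat] at hβv
  obtain ⟨hPv, hCv⟩ := mulVec_eq_zero_and_smul_mulVec_eq_of_mulVec_eq_smul hPC hPP hβ hβv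
  set γ : ℂ := (1 - β) / α with hγdef
  have hγ : C *ᵥ v = γ • v := by
    rw [hγdef, div_eq_inv_mul, mul_smul, ← hCv, smul_smul, inv_mul_cancel₀ hαC, one_smul]
  have heig : Module.End.HasEigenvalue (toLin' C) γ :=
    Module.End.hasEigenvalue_of_hasEigenvector ⟨Module.End.mem_eigenspace_iff.2 hγ, hv⟩
  have hβγ : β = 1 - α * γ := by
    rw [hγdef, mul_div_cancel₀ _ hαC]
    ring
  exact hβγ ▸ hsmall α hα hαle γ heig (re_pos_of_saddleMatrix_mulVec_eq_smul hH hker hv hPv hγ)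

end Spectral

theorem stmt14_general (m N q : ℕ)
    (F : (Fin m → ℝ) → ℝ) (hb : Fin N → (Fin m → ℝ) → ℝ)
    (hF : ContDiff ℝ 2 F) (hhb : ∀ i, ContDiff ℝ 2 (hb i))
    (Sb : Matrix (Fin q) (Fin m) ℝ) (J : Matrix (Fin q) (Fin q) ℝ)
    (hJsym : Jᵀ = J) (hJidem : J * J = J)
    (hJmem : ∀ w : Fin q → ℝ, Sbᵀ *ᵥ (J *ᵥ w) = 0)
    (hJfix : ∀ w : Fin q → ℝ, Sbᵀ *ᵥ w = 0 → J *ᵥ w = w)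
    (xs : Fin m → ℝ) (μs : Fin N → ℝ) (lams : Fin q → ℝ)
    (Hess : Matrix (Fin m) (Fin m) ℝ)
    (hHess : Hess = hessMat
      (fun x => F x + ∑ i, μs i * hb i x + lams ⬝ᵥ (Sb *ᵥ x)) xs)
    (hpd : Hess.PosDef)
    (hnull : ∀ (u : Fin N → ℝ) (v : Fin q → ℝ),
      (∑ i, u i • gradVec (hb i) xs) + Sbᵀ *ᵥ v = 0 → u = 0 ∧ Sbᵀ *ᵥ v = 0)
    (Mα : ℝ → ((Fin m ⊕ (Fin N ⊕ Fin q)) → ℝ) → ((Fin m ⊕ (Fin N ⊕ Fin q)) → ℝ))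
    (hM : ∀ α z, Mα α z = Sum.elim
      (fun p => z (Sum.inl p) - α *
        (gradVec F (fun r => z (Sum.inl r)) p
          + (∑ i, z (Sum.inr (Sum.inl i)) * gradVec (hb i) (fun r => z (Sum.inl r)) p)
          + (Sbᵀ *ᵥ fun k => z (Sum.inr (Sum.inr k))) p))
      (Sum.elim
        (fun i => z (Sum.inr (Sum.inl i)) + α * hb i (fun r => z (Sum.inl r)))
        (fun k => (((1 : Matrix (Fin q) (Fin q) ℝ) - J) *ᵥ
            fun k' => z (Sum.inr (Sum.inr k'))) k
          + α * (Sb *ᵥ fun r => z (Sum.inl r)) k)))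
    (B : ℝ → Matrix (Fin m ⊕ (Fin N ⊕ Fin q)) (Fin m ⊕ (Fin N ⊕ Fin q)) ℝ)
    (hB : ∀ α, B α = Matrix.fromBlocks Hess
      (Matrix.fromCols (Matrix.of fun p i => gradVec (hb i) xs p) Sbᵀ)
      (Matrix.fromRows (-(Matrix.of fun i p => gradVec (hb i) xs p)) (-Sb))
      (Matrix.fromBlocks 0 0 0 (α⁻¹ • J)))
    (zs : (Fin m ⊕ (Fin N ⊕ Fin q)) → ℝ)
    (hzs : zs = Sum.elim xs (Sum.elim μs lams)) :
    (∀ α : ℝ, 0 < α →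
      (fderiv ℝ (Mα α) zs : ((Fin m ⊕ (Fin N ⊕ Fin q)) → ℝ) →ₗ[ℝ]
          ((Fin m ⊕ (Fin N ⊕ Fin q)) → ℝ))
        = ((1 : Matrix (Fin m ⊕ (Fin N ⊕ Fin q)) (Fin m ⊕ (Fin N ⊕ Fin q)) ℝ)
            - α • B α).mulVecLin) ∧
    (∃ αbar > (0 : ℝ), ∀ α : ℝ, 0 < α → α ≤ αbar →
      ∀ (β : ℂ) (v : Fin m ⊕ (Fin N ⊕ Fin q) → ℂ), v ≠ 0 →
        (((1 : Matrix (Fin m ⊕ (Fin N ⊕ Fin q)) (Fin m ⊕ (Fin N ⊕ Fin q)) ℝ)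
            - α • B α).map Complex.ofReal) *ᵥ v = β • v →
        ‖β‖ < 1) := by
  subst hzs
  obtain rfl : Hess = hessMat (lagrangian F hb Sb μs lams) xs := hHess
  have hBα : ∀ α, B α = saddleMatrix (hessMat (lagrangian F hb Sb μs lams) xs)
      (constraintJacobian hb Sb xs) + α⁻¹ • fromBlocks 0 0 0 (fromBlocks 0 0 0 J) := by
    intro α
    rw [hB]
    ext (p | i | k) (r | j | k') <;> simp [saddleMatrix, constraintJacobian]
  refine ⟨fun α hα => ?_, ?_⟩
  · have hMα : Mα α = fixedPointMap F hb Sb J α := by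
      funext z
      rw [hM]
      ext (p | i | k) <;>
        simp [fixedPointMap, saddleField, gradLagrangian, fromBlocks_mulVec, sub_mulVec,
          Function.comp_def]
    rw [hMα, (hasFDerivAt_fixedPointMap hF hhb J hα.ne' _).fderiv, hBα]
    rfl
  · have hJS : J * Sb = 0 := by
      have hSJ : Sbᵀ * J = 0 := ext_iff_mulVec.2 fun w => by simp [← mulVec_mulVec, hJmem]
      rw [← hJsym, ← transpose_transpose Sb, ← transpose_mul, hSJ, transpose_zero]
    obtain ⟨αbar, hαbar, hsmall⟩ := exists_pos_forall_norm_lt_one_of_saddleMatrix hpd _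
      (by simp [fromBlocks_multiply, hJidem]) (fromBlocks_mul_transpose_constraintJacobian hJS xs)
      fun y hEy hJy => eq_zero_of_constraintJacobian_mulVec_eq_zero hnull hJfix hEy hJy
    exact ⟨αbar, hαbar, fun α hα hαle => hBα α ▸ hsmall α hα hαle⟩

/-- the Jacobian of the Lagrangian-method fixed-point map
`M_α(x,μ,λ̃) = (x − α∇ₓL, μ + α∇_μL, (I−J)λ̃ + α∇_λL)` at a stationary pair
`(x*,μ*,λ*)` (with `λ* ∈ Range(S_bold)`, `∇²ₓₓL(x*,μ*,λ*) ≻ 0`) equals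
`I − αB`, and there is `ᾱ > 0` such that for `α ∈ (0, ᾱ]` the spectral radius
of `I − αB` is `< 1`. -/
theorem stmt14 (m N q : ℕ)
    (F : (Fin m → ℝ) → ℝ) (hb : Fin N → (Fin m → ℝ) → ℝ)
    (hF : ContDiff ℝ 2 F) (hhb : ∀ i, ContDiff ℝ 2 (hb i))
    (Sb : Matrix (Fin q) (Fin m) ℝ) (J : Matrix (Fin q) (Fin q) ℝ)
    (hJsym : Jᵀ = J) (hJidem : J * J = J)
    (hJmem : ∀ w : Fin q → ℝ, Sbᵀ *ᵥ (J *ᵥ w) = 0)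
    (hJfix : ∀ w : Fin q → ℝ, Sbᵀ *ᵥ w = 0 → J *ᵥ w = w)
    (xs : Fin m → ℝ) (μs : Fin N → ℝ) (lams : Fin q → ℝ)
    (hlams : lams ∈ LinearMap.range Sb.mulVecLin)
    (hstat : gradVec F xs + (∑ i, μs i • gradVec (hb i) xs) + Sbᵀ *ᵥ lams = 0)
    (hfeas1 : ∀ i, hb i xs = 0) (hfeas2 : Sb *ᵥ xs = 0)
    (Hess : Matrix (Fin m) (Fin m) ℝ)
    (hHess : Hess = hessMat
      (fun x => F x + ∑ i, μs i * hb i x + lams ⬝ᵥ (Sb *ᵥ x)) xs)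
    (hpd : Hess.PosDef)
    (hnull : ∀ (u : Fin N → ℝ) (v : Fin q → ℝ),
      (∑ i, u i • gradVec (hb i) xs) + Sbᵀ *ᵥ v = 0 → u = 0 ∧ Sbᵀ *ᵥ v = 0)
    (Mα : ℝ → ((Fin m ⊕ (Fin N ⊕ Fin q)) → ℝ) → ((Fin m ⊕ (Fin N ⊕ Fin q)) → ℝ))
    (hM : ∀ α z, Mα α z = Sum.elim
      (fun p => z (Sum.inl p) - α *
        (gradVec F (fun r => z (Sum.inl r)) p
          + (∑ i, z (Sum.inr (Sum.inl i)) * gradVec (hb i) (fun r => z (Sum.inl r)) p)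
          + (Sbᵀ *ᵥ fun k => z (Sum.inr (Sum.inr k))) p))
      (Sum.elim
        (fun i => z (Sum.inr (Sum.inl i)) + α * hb i (fun r => z (Sum.inl r)))
        (fun k => (((1 : Matrix (Fin q) (Fin q) ℝ) - J) *ᵥ
            fun k' => z (Sum.inr (Sum.inr k'))) k
          + α * (Sb *ᵥ fun r => z (Sum.inl r)) k)))
    (B : ℝ → Matrix (Fin m ⊕ (Fin N ⊕ Fin q)) (Fin m ⊕ (Fin N ⊕ Fin q)) ℝ)
    (hB : ∀ α, B α = Matrix.fromBlocks Hess
      (Matrix.fromCols (Matrix.of fun p i => gradVec (hb i) xs p) Sbᵀ)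
      (Matrix.fromRows (-(Matrix.of fun i p => gradVec (hb i) xs p)) (-Sb))
      (Matrix.fromBlocks 0 0 0 (α⁻¹ • J)))
    (zs : (Fin m ⊕ (Fin N ⊕ Fin q)) → ℝ)
    (hzs : zs = Sum.elim xs (Sum.elim μs lams)) :
    (∀ α : ℝ, 0 < α →
      (fderiv ℝ (Mα α) zs : ((Fin m ⊕ (Fin N ⊕ Fin q)) → ℝ) →ₗ[ℝ]
          ((Fin m ⊕ (Fin N ⊕ Fin q)) → ℝ))
        = ((1 : Matrix (Fin m ⊕ (Fin N ⊕ Fin q)) (Fin m ⊕ (Fin N ⊕ Fin q)) ℝ)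
            - α • B α).mulVecLin) ∧
    (∃ αbar > (0 : ℝ), ∀ α : ℝ, 0 < α → α ≤ αbar →
      ∀ (β : ℂ) (v : Fin m ⊕ (Fin N ⊕ Fin q) → ℂ), v ≠ 0 →
        (((1 : Matrix (Fin m ⊕ (Fin N ⊕ Fin q)) (Fin m ⊕ (Fin N ⊕ Fin q)) ℝ)
            - α • B α).map Complex.ofReal) *ᵥ v = β • v →
        ‖β‖ < 1) :=
  stmt14_general m N q F hb hF hhb Sb J hJsym hJidem hJmem hJfix xs μs lams Hess hHess hpd hnull Mα
    hM B hB zs hzs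
end
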